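/- Let K be an algebraically closed field of characteristic 0 and let I ⊆ K[a₁,…,a_m][x₁^±,…,x_n^±] be a parametrized Laurent polynomial ideal that is generically zero-dimensional, with generic root count ℓ := dim_{K(a)} K(a)[x^±]/I_{K(a)} < ∞. Then there exists a nonzero polynomial g ∈ K[a₁,…,a_m] such that for every P ∈ K^m with g(P) ≠ 0, the specialization satisfies dim_K K[x₁^±,…,x_n^±]/I_P = ℓ. (Since K^m is irreducible in the Zariski topology, this says that the root count equals the generic root count on a Zariski-dense open subset of the parameter space.) -/

import Mathlib

open AddMonoidAlgebra

noncomputable section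

/-- The Laurent polynomial ring in `n` variables over `R`: the group algebra of `ℤ^n`. -/
abbrev Laurent (R : Type*) [CommRing R] (n : ℕ) : Type _ :=
  AddMonoidAlgebra R (Fin n →₀ ℤ)

/-- The ring homomorphism between (Laurent) monoid algebras induced by a ring
homomorphism on the coefficients. -/
def coeffRingHom {R S : Type*} [CommRing R] [CommRing S] {G : Type*} [AddCommMonoid G]
    (f : R →+* S) : AddMonoidAlgebra R G →+* AddMonoidAlgebra S G :=
  AddMonoidAlgebra.liftNCRingHom (AddMonoidAlgebra.singleZeroRingHom.comp f)
    (AddMonoidAlgebra.of S G) (fun _ _ => Commute.all _ _)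

/-- The parametrized Laurent polynomial ring `K[a][x^±]`, with parameters indexed by `σ`. -/
abbrev Param (K : Type*) [Field K] (σ : Type*) (n : ℕ) : Type _ :=
  Laurent (MvPolynomial σ K) n

/-- The rational function field `K(a)`. -/
abbrev RatFF (K : Type*) [Field K] (σ : Type*) : Type _ :=
  FractionRing (MvPolynomial σ K)

/-- The generic specialization `I_{K(a)}` of a parametrized Laurent polynomial ideal:
the ideal generated by the image of `I` in `K(a)[x^±]`. -/
def genericSpec {K : Type*} [Field K] {σ : Type*} {n : ℕ} (I : Ideal (Param K σ n)) :
    Ideal (Laurent (RatFF K σ) n) :=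
  Ideal.map (coeffRingHom (algebraMap (MvPolynomial σ K) (RatFF K σ))) I

/-- The generic root count `ℓ_{I,K(a)} = dim_{K(a)} K(a)[x^±]/I_{K(a)}`, as a cardinal. -/
def genericRootCount {K : Type*} [Field K] {σ : Type*} {n : ℕ} (I : Ideal (Param K σ n)) :
    Cardinal :=
  Module.rank (RatFF K σ) (Laurent (RatFF K σ) n ⧸ genericSpec I)

/-- `I` is generically a complete intersection: `K(a)[x^±]/I_{K(a)}` is isomorphic, as a
`K(a)`-algebra, to a quotient `K(a)[z₁,…,z_r]/⟨f₁,…,f_k⟩` of Krull dimension `r - k`. -/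
def IsGenericCompleteIntersection {K : Type*} [Field K] {σ : Type*} {n : ℕ}
    (I : Ideal (Param K σ n)) : Prop :=
  ∃ (r k : ℕ) (f : Fin k → MvPolynomial (Fin r) (RatFF K σ)), k ≤ r ∧
    Nonempty ((Laurent (RatFF K σ) n ⧸ genericSpec I) ≃ₐ[RatFF K σ]
      (MvPolynomial (Fin r) (RatFF K σ) ⧸ Ideal.span (Set.range f))) ∧
    ringKrullDim (MvPolynomial (Fin r) (RatFF K σ) ⧸ Ideal.span (Set.range f)) = ((r - k : ℕ) : WithBot ℕ∞)

/-- The specialization `I_P` of a parametrized Laurent polynomial ideal at `P ∈ K^m`. -/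
def specialization {K : Type*} [Field K] {m n : ℕ} (I : Ideal (Param K (Fin m) n))
    (P : Fin m → K) : Ideal (Laurent K n) :=
  Ideal.map (coeffRingHom (MvPolynomial.eval P)) I

end

/-! Let `M = K[a][x^±]/I`. A basis of `K(a)[x^±]/I_{K(a)}` can be chosen, after clearing
denominators, as the image of a family `b` in `M`; since the kernel of
`M → K(a)[x^±]/I_{K(a)}` is torsion, `b` is linearly independent over `K[a]` and spans `M` up to
denominators. As `M` is a finitely generated `K[a]`-algebra, a common denominator `g` of `1` and
of the products of finitely many generators with the `b i` makes `b` span `M[1/g]`, so `M[1/g]`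
is free with basis `b`. If `g(P) ≠ 0`, the images of `b` span `K[x^±]/I_P`, and they are
independent: a relation lifts to `M`, where after multiplication by a power of `g` its
coefficients lie in the kernel of evaluation at `P`. -/

open AddMonoidAlgebra

namespace Submodule

variable {A M : Type*} [CommRing A] [AddCommGroup M] [Module A M]

/-- `P.saturationAway g = ⊤` says that `P` becomes all of `M` once `g` is inverted. -/
def saturationAway (P : Submodule A M) (g : A) : Submodule A M where
  carrier := {m | ∃ k : ℕ, g ^ k • m ∈ P}
  zero_mem' := ⟨0, by simp⟩
  add_mem' := by
    rintro m₁ m₂ ⟨k₁, h₁⟩ ⟨k₂, h₂⟩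
    refine ⟨k₁ + k₂, ?_⟩
    rw [smul_add, pow_add, mul_comm, mul_smul, mul_comm, mul_smul]
    exact P.add_mem (P.smul_mem _ h₁) (P.smul_mem _ h₂)
  smul_mem' a m := by
    rintro ⟨k, h⟩
    exact ⟨k, by rw [smul_comm]; exact P.smul_mem a h⟩

variable {P : Submodule A M} {g : A}

theorem mem_saturationAway {m : M} : m ∈ P.saturationAway g ↔ ∃ k : ℕ, g ^ k • m ∈ P :=
  Iff.rfl

theorem ideal_smul_top_le_saturationAway_smul (hP : P.saturationAway g = ⊤) (J : Ideal A) :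
    J • (⊤ : Submodule A M) ≤ (J • P).saturationAway g := by
  refine smul_le.2 fun a ha m _ => ?_
  obtain ⟨k, hk⟩ := mem_saturationAway.1 (hP ▸ mem_top : m ∈ P.saturationAway g)
  exact ⟨k, by rw [smul_comm]; exact smul_mem_smul ha hk⟩

theorem exists_ne_zero_smul_mem_of_finite [IsDomain A] (P : Submodule A M) {T : Set M}
    (hT : T.Finite) (h : ∀ t ∈ T, ∃ d : A, d ≠ 0 ∧ d • t ∈ P) :
    ∃ g : A, g ≠ 0 ∧ ∀ t ∈ T, g • t ∈ P := by
  induction T, hT using Set.Finite.induction_on with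
  | empty => exact ⟨1, one_ne_zero, by simp⟩
  | @insert t T _ _ ih =>
    obtain ⟨d, hd, hdt⟩ := h t (Set.mem_insert t T)
    obtain ⟨g, hg, hgT⟩ := ih fun t ht => h t (Set.mem_insert_of_mem _ ht)
    refine ⟨g * d, mul_ne_zero hg hd, ?_⟩
    rintro s (rfl | hs)
    · rw [mul_smul]; exact P.smul_mem g hdt
    · rw [mul_comm, mul_smul]; exact P.smul_mem d (hgT s hs)

theorem saturationAway_span_eq_top_of_adjoin_eq_top {R ι : Type*} [CommRing R] [Algebra A R]
    {s : Set R} (hs : Algebra.adjoin A s = ⊤) {b : ι → R}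
    (h1 : g • (1 : R) ∈ span A (Set.range b))
    (hmul : ∀ y ∈ s, ∀ i, g • (y * b i) ∈ span A (Set.range b)) :
    (span A (Set.range b)).saturationAway g = ⊤ := by
  set P := span A (Set.range b)
  have hstable : ∀ y ∈ s, ∀ w ∈ P.saturationAway g, y * w ∈ P.saturationAway g := by
    rintro y hy w ⟨k, hk⟩
    have hyP : P ≤ P.comap (g • LinearMap.mulLeft A y) :=
      span_le.2 (Set.range_subset_iff.2 (hmul y hy))
    refine ⟨k + 1, ?_⟩
    simpa [pow_succ, mul_smul, mul_smul_comm] using hyP hk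
  have hadjoin : ∀ x ∈ Algebra.adjoin A s, ∀ w ∈ P.saturationAway g,
      x * w ∈ P.saturationAway g := by
    intro x hx
    induction hx using Algebra.adjoin_induction with
    | mem y hy => exact hstable y hy
    | algebraMap r => intro w hw; rw [← Algebra.smul_def]; exact smul_mem _ r hw
    | add y z _ _ hy hz => intro w hw; rw [add_mul]; exact add_mem (hy w hw) (hz w hw)
    | mul y z _ _ hy hz => intro w hw; rw [mul_assoc]; exact hy _ (hz w hw)
  refine eq_top_iff.2 fun x _ => ?_
  simpa using hadjoin x (hs ▸ Algebra.mem_top) 1 ⟨1, by simpa using h1⟩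

theorem exists_saturationAway_span_eq_top [IsDomain A] {R ι : Type*} [CommRing R] [Algebra A R]
    [Algebra.FiniteType A R] [Finite ι] {b : ι → R}
    (hb : ∀ x, ∃ d : A, d ≠ 0 ∧ d • x ∈ span A (Set.range b)) :
    ∃ g : A, g ≠ 0 ∧ (span A (Set.range b)).saturationAway g = ⊤ := by
  obtain ⟨s, hs⟩ := Algebra.FiniteType.out (R := A) (A := R)
  obtain ⟨g, hg, hgT⟩ := (span A (Set.range b)).exists_ne_zero_smul_mem_of_finite
    ((s.finite_toSet.image2 (· * ·) (Set.finite_range b)).insert 1) (fun t _ => hb t)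
  exact ⟨g, hg, saturationAway_span_eq_top_of_adjoin_eq_top hs (hgT 1 (Set.mem_insert _ _))
    fun y hy i => hgT _ (Set.mem_insert_of_mem _ (Set.mem_image2_of_mem hy ⟨i, rfl⟩))⟩

end Submodule

section Specialization

open Submodule

variable {A K M N ι : Type*} [CommRing A] [Field K] [AddCommGroup M] [Module A M]
  [AddCommGroup N] [Module K N] {π : A →+* K} (ψ : M →ₛₗ[π] N) {b : ι → M} {g : A}

theorem span_comp_eq_top_of_saturationAway (hψ : Function.Surjective ψ) (hg : π g ≠ 0)
    (hb : (span A (Set.range b)).saturationAway g = ⊤) :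
    span K (Set.range (ψ ∘ b)) = ⊤ := by
  refine eq_top_iff.2 fun y _ => ?_
  obtain ⟨m, rfl⟩ := hψ y
  obtain ⟨k, hk⟩ :=
    mem_saturationAway.1 (hb ▸ mem_top : m ∈ (span A (Set.range b)).saturationAway g)
  have hmap : ψ (g ^ k • m) ∈ span K (Set.range (ψ ∘ b)) := by
    rw [Set.range_comp]
    exact image_span_subset_span ψ _ ⟨_, hk, rfl⟩
  rw [map_smulₛₗ, map_pow] at hmap
  simpa [smul_smul, pow_ne_zero k hg] using smul_mem _ (π g ^ k)⁻¹ hmap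

theorem linearIndependent_comp_of_saturationAway [Fintype ι] (hπ : Function.Surjective π)
    (hker : ∀ m, ψ m = 0 → m ∈ RingHom.ker π • (⊤ : Submodule A M)) (hg : π g ≠ 0)
    (hli : LinearIndependent A b) (hb : (span A (Set.range b)).saturationAway g = ⊤) :
    LinearIndependent K (ψ ∘ b) := by
  rw [Fintype.linearIndependent_iff]
  intro c hc i
  choose s hs using hπ
  set w := ∑ i, s (c i) • b i
  have hw : ψ w = 0 := by simpa [w, map_sum, hs] using hc
  obtain ⟨k, hk⟩ := ideal_smul_top_le_saturationAway_smul hb _ (hker w hw)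
  obtain ⟨μ, hμ, hμw⟩ := (mem_ideal_smul_span_iff_exists_sum _ _ _).1 hk
  have hcoeff : ∀ i, g ^ k * s (c i) = μ i := by
    have := Fintype.linearIndependent_iff.1 hli (fun i => g ^ k * s (c i) - μ i) (by
      simp only [sub_smul, Finset.sum_sub_distrib, mul_smul, ← Finset.smul_sum]
      rw [← hμw, Finsupp.sum_fintype _ _ (by simp), sub_self])
    exact fun i => sub_eq_zero.1 (this i)
  have := congrArg π (hcoeff i)
  rw [map_mul, map_pow, hs, hμ i, mul_eq_zero] at this
  exact this.resolve_left (pow_ne_zero k hg)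

theorem rank_eq_card_of_saturationAway [Fintype ι] (hπ : Function.Surjective π)
    (hψ : Function.Surjective ψ)
    (hker : ∀ m, ψ m = 0 → m ∈ RingHom.ker π • (⊤ : Submodule A M)) (hg : π g ≠ 0)
    (hli : LinearIndependent A b)
    (hb : (span A (Set.range b)).saturationAway g = ⊤) :
    Module.rank K N = Fintype.card ι :=
  rank_eq_card_basis <| .mk (linearIndependent_comp_of_saturationAway ψ hπ hker hg hli hb)
    (span_comp_eq_top_of_saturationAway ψ hψ hg hb).ge

end Specialization

section FractionField

open Submodule

variable {A F M N ι : Type*} [CommRing A] [IsDomain A] [Field F] [Algebra A F]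
  [IsFractionRing A F] [AddCommGroup M] [Module A M] [AddCommGroup N] [Module F N]
  (ψ : M →ₛₗ[algebraMap A F] N)

theorem exists_linearIndependent_smul_mem_span [Fintype ι] (v : Module.Basis ι F N)
    (hψ : ∀ y, ∃ d : A, d ≠ 0 ∧ ∃ m, algebraMap A F d • y = ψ m)
    (hker : ∀ m, ψ m = 0 → ∃ d : A, d ≠ 0 ∧ d • m = 0) :
    ∃ b : ι → M, LinearIndependent A b ∧
      ∀ m, ∃ d : A, d ≠ 0 ∧ d • m ∈ span A (Set.range b) := by
  choose d hd b hb using fun i => hψ (v i)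
  have hunit : ∀ i, IsUnit (algebraMap A F (d i)) := fun i =>
    (map_ne_zero_iff _ (IsFractionRing.injective A F)).2 (hd i) |>.isUnit
  let u := v.unitsSMul fun i => (hunit i).unit
  have hu : ∀ i, u i = ψ (b i) := fun i => by
    rw [v.unitsSMul_apply, Units.smul_def, IsUnit.unit_spec, hb]
  refine ⟨b, Fintype.linearIndependent_iff.2 fun c hc i => ?_, fun m => ?_⟩
  · have h := congrArg ψ hc
    simp only [map_sum, map_smulₛₗ, ← hu, map_zero] at h
    exact IsFractionRing.injective A F
      (by rw [Fintype.linearIndependent_iff.1 u.linearIndependent _ h i, map_zero])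
  · obtain ⟨D, hD⟩ := IsLocalization.exist_integer_multiples (nonZeroDivisors A)
      Finset.univ fun i => u.repr (ψ m) i
    choose p hp using fun i => hD i (Finset.mem_univ i)
    obtain ⟨d', hd', hd'm⟩ := hker ((D : A) • m - ∑ i, p i • b i) (by
      simp only [map_sub, map_sum, map_smulₛₗ, ← hu, hp, Algebra.smul_def,
        mul_smul, ← Finset.smul_sum, u.sum_repr, sub_self])
    refine ⟨d' * D, mul_ne_zero hd' (nonZeroDivisors.coe_ne_zero D), ?_⟩
    rw [smul_sub, sub_eq_zero] at hd'm
    rw [mul_smul, hd'm]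
    exact smul_mem _ _ (sum_mem fun i _ => smul_mem _ _ (subset_span ⟨i, rfl⟩))

end FractionField

theorem Ideal.exists_smul_eq_of_mem_map {A R S : Type*} [CommSemiring A] [CommSemiring R]
    [CommSemiring S] [Algebra A R] [Algebra A S] (φ : R →ₐ[A] S) (T : Submonoid A)
    (hφ : ∀ s, ∃ d ∈ T, ∃ r, d • s = φ r) {I : Ideal R} {z : S} (hz : z ∈ I.map φ) :
    ∃ d ∈ T, ∃ w ∈ I, d • z = φ w := by
  induction hz using Submodule.span_induction with
  | mem z hz =>
    obtain ⟨w, hw, rfl⟩ := hz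
    exact ⟨1, T.one_mem, w, hw, one_smul _ _⟩
  | zero => exact ⟨1, T.one_mem, 0, I.zero_mem, by simp⟩
  | add z₁ z₂ _ _ h₁ h₂ =>
    obtain ⟨d₁, hd₁, w₁, hw₁, h₁⟩ := h₁
    obtain ⟨d₂, hd₂, w₂, hw₂, h₂⟩ := h₂
    refine ⟨d₁ * d₂, T.mul_mem hd₁ hd₂, d₂ • w₁ + d₁ • w₂,
      I.add_mem (I.smul_of_tower_mem _ hw₁) (I.smul_of_tower_mem _ hw₂), ?_⟩
    rw [map_add, map_smul, map_smul, ← h₁, ← h₂, smul_add, mul_comm, mul_smul, mul_comm,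
      mul_smul]
  | smul s z _ h =>
    obtain ⟨d₁, hd₁, w, hw, h⟩ := h
    obtain ⟨d₂, hd₂, r, hr⟩ := hφ s
    refine ⟨d₂ * d₁, T.mul_mem hd₂ hd₁, r * w, I.mul_mem_left r hw, ?_⟩
    rw [map_mul, ← hr, ← h, smul_eq_mul, smul_mul_smul_comm]

section CoeffMap

variable {R S G : Type*} [CommRing R] [CommRing S] [AddCommMonoid G]

theorem coeffRingHom_eq_mapRingHom (f : R →+* S) : coeffRingHom f = mapRingHom G f := by
  ext <;> simp [coeffRingHom]

theorem mapRingHom_smul (f : R →+* S) (r : R) (p : R[G]) :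
    mapRingHom G f (r • p) = f r • mapRingHom G f p := by
  ext; simp

theorem mem_ker_smul_top_of_mapRingHom_eq_zero {f : R →+* S} {p : R[G]}
    (hp : mapRingHom G f p = 0) : p ∈ RingHom.ker f • (⊤ : Submodule R R[G]) := by
  rw [← sum_coeff_single p, Finsupp.sum]
  refine Submodule.sum_mem _ fun e _ => ?_
  have hcoeff : p.coeff e ∈ RingHom.ker f := by
    rw [RingHom.mem_ker, ← coeff_mapRingHom, hp, coeff_zero, Finsupp.zero_apply]
  simpa [smul_single'] using
    Submodule.smul_mem_smul hcoeff (Submodule.mem_top (x := single e (1 : R)))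

noncomputable def quotientMapCoeff (f : R →+* S) (I : Ideal R[G]) :
    (R[G] ⧸ I) →ₛₗ[f] (S[G] ⧸ I.map (mapRingHom G f)) where
  toFun := Ideal.quotientMap _ (mapRingHom G f) Ideal.le_comap_map
  map_add' := map_add _
  map_smul' r x := by
    obtain ⟨p, rfl⟩ := Ideal.Quotient.mk_surjective x
    rw [← Ideal.Quotient.mkₐ_eq_mk R, ← map_smul, Ideal.Quotient.mkₐ_eq_mk]
    simp only [Ideal.quotientMap_mk, mapRingHom_smul]
    exact map_smul (Ideal.Quotient.mkₐ S _) (f r) _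

@[simp]
theorem quotientMapCoeff_mk (f : R →+* S) (I : Ideal R[G]) (p : R[G]) :
    quotientMapCoeff f I (Ideal.Quotient.mk I p) = Ideal.Quotient.mk _ (mapRingHom G f p) := rfl

theorem quotientMapCoeff_surjective {f : R →+* S} (hf : Function.Surjective f) (I : Ideal R[G]) :
    Function.Surjective (quotientMapCoeff f I) :=
  Ideal.quotientMap_surjective (H := Ideal.le_comap_map) (map_surjective (f : R →+ S) hf)

theorem mem_ker_smul_top_of_quotientMapCoeff_eq_zero {f : R →+* S} (hf : Function.Surjective f)
    {I : Ideal R[G]} {x : R[G] ⧸ I} (hx : quotientMapCoeff f I x = 0) :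
    x ∈ RingHom.ker f • (⊤ : Submodule R (R[G] ⧸ I)) := by
  obtain ⟨p, rfl⟩ := Ideal.Quotient.mk_surjective x
  rw [quotientMapCoeff_mk, Ideal.Quotient.eq_zero_iff_mem,
    Ideal.mem_map_iff_of_surjective _ (map_surjective (f : R →+ S) hf)] at hx
  obtain ⟨w, hwI, hw⟩ := hx
  have hpw : Ideal.Quotient.mk I p = Ideal.Quotient.mkₐ R I (p - w) := by
    simp [Ideal.Quotient.eq_zero_iff_mem.2 hwI]
  have hker : p - w ∈ RingHom.ker f • (⊤ : Submodule R R[G]) :=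
    mem_ker_smul_top_of_mapRingHom_eq_zero (by rw [map_sub, hw, sub_self])
  have := Submodule.mem_map_of_mem (f := (Ideal.Quotient.mkₐ R I).toLinearMap) hker
  rw [Submodule.map_smul''] at this
  exact hpw ▸ Submodule.smul_mono le_rfl le_top this

end CoeffMap

section FractionFieldCoeff

variable {A F G : Type*} [CommRing A] [Field F] [Algebra A F] [IsFractionRing A F]
  [AddCommMonoid G]

theorem exists_smul_eq_mapAlgHom (z : F[G]) :
    ∃ d ∈ nonZeroDivisors A, ∃ β : A[G], d • z = mapAlgHom G (Algebra.ofId A F) β := by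
  obtain ⟨D, hD⟩ := IsLocalization.exist_integer_multiples (nonZeroDivisors A) z.coeff.support
    z.coeff
  have hrange : (D : A) • z ∈ Set.range (map (algebraMap A F : A →+ F) : A[G] → F[G]) := by
    rw [range_map]
    intro e
    by_cases he : e ∈ z.coeff.support
    · obtain ⟨p, hp⟩ := hD e he
      exact ⟨p, by simpa using hp⟩
    · exact ⟨0, by simp [Finsupp.notMem_support_iff.1 he]⟩
  obtain ⟨β, hβ⟩ := hrange
  exact ⟨D, D.2, β, hβ.symm⟩

variable [IsDomain A] (I : Ideal A[G])

theorem exists_smul_eq_quotientMapCoeff (y : F[G] ⧸ I.map (mapRingHom G (algebraMap A F))) :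
    ∃ d : A, d ≠ 0 ∧ ∃ m,
      algebraMap A F d • y = quotientMapCoeff (algebraMap A F) I m := by
  obtain ⟨z, rfl⟩ := Ideal.Quotient.mk_surjective y
  obtain ⟨d, hd, β, hβ⟩ := exists_smul_eq_mapAlgHom (A := A) z
  refine ⟨d, nonZeroDivisors.ne_zero hd, Ideal.Quotient.mk I β, ?_⟩
  rw [quotientMapCoeff_mk, algebraMap_smul]
  exact congrArg (Ideal.Quotient.mk _) hβ

theorem exists_smul_eq_zero_of_quotientMapCoeff_eq_zero {m : A[G] ⧸ I}
    (hm : quotientMapCoeff (algebraMap A F) I m = 0) : ∃ d : A, d ≠ 0 ∧ d • m = 0 := by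
  obtain ⟨β, rfl⟩ := Ideal.Quotient.mk_surjective m
  rw [quotientMapCoeff_mk, Ideal.Quotient.eq_zero_iff_mem] at hm
  obtain ⟨d, hd, w, hw, hdw⟩ := Ideal.exists_smul_eq_of_mem_map (mapAlgHom G (Algebra.ofId A F))
    _ exists_smul_eq_mapAlgHom hm
  have hβw : d • β = w := map_injective _ (IsFractionRing.injective A F)
    ((map_smul (mapAlgHom G (Algebra.ofId A F)) d β).trans hdw)
  refine ⟨d, nonZeroDivisors.ne_zero hd, ?_⟩
  rw [← Ideal.Quotient.mkₐ_eq_mk A, ← map_smul, hβw, Ideal.Quotient.mkₐ_eq_mk,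
    Ideal.Quotient.eq_zero_iff_mem]
  exact hw

end FractionFieldCoeff

theorem statement9_general {K : Type*} [Field K] {m n : ℕ}
    (I : Ideal (Param K (Fin m) n)) (h : genericRootCount I < Cardinal.aleph0) :
    ∃ g : MvPolynomial (Fin m) K, g ≠ 0 ∧
      ∀ P : Fin m → K, MvPolynomial.eval P g ≠ 0 →
        Module.rank K (Laurent K n ⧸ specialization I P) = genericRootCount I := by
  set A := MvPolynomial (Fin m) K
  set F := RatFF K (Fin m)
  rw [genericRootCount, genericSpec, coeffRingHom_eq_mapRingHom] at h ⊢
  have : Module.Finite F (Laurent F n ⧸ I.map (mapRingHom _ (algebraMap A F))) :=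
    Module.rank_lt_aleph0_iff.1 h
  obtain ⟨b, hli, hden⟩ := exists_linearIndependent_smul_mem_span
    (quotientMapCoeff (algebraMap A F) I) (Module.finBasis F _)
    (exists_smul_eq_quotientMapCoeff I) (fun _ => exists_smul_eq_zero_of_quotientMapCoeff_eq_zero I)
  have : AddMonoid.FG (Fin n →₀ ℤ) :=
    AddGroup.fg_iff_addMonoid_fg.1 (Module.Finite.iff_addGroup_fg.1 inferInstance)
  obtain ⟨g, hg, hsat⟩ := Submodule.exists_saturationAway_span_eq_top hden
  refine ⟨g, hg, fun P hP => ?_⟩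
  have hπ : Function.Surjective (MvPolynomial.eval P) := fun k => ⟨_, MvPolynomial.eval_C k⟩
  rw [specialization, coeffRingHom_eq_mapRingHom,
    rank_eq_card_of_saturationAway (quotientMapCoeff _ I) hπ (quotientMapCoeff_surjective hπ I)
      (fun _ => mem_ker_smul_top_of_quotientMapCoeff_eq_zero hπ) hP hli hsat,
    ← Module.finrank_eq_rank, Fintype.card_fin]

/-- If `I` is generically zero-dimensional, there is a nonzero polynomial
`g ∈ K[a₁,…,a_m]` such that for every choice of parameters `P` with `g(P) ≠ 0`, the root
count of the specialization `I_P` equals the generic root count. -/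
theorem statement9 {K : Type*} [Field K] [IsAlgClosed K] [CharZero K] {m n : ℕ}
    (I : Ideal (Param K (Fin m) n)) (h : genericRootCount I < Cardinal.aleph0) :
    ∃ g : MvPolynomial (Fin m) K, g ≠ 0 ∧
      ∀ P : Fin m → K, MvPolynomial.eval P g ≠ 0 →
        Module.rank K (Laurent K n ⧸ specialization I P) = genericRootCount I :=
  statement9_general I h
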